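/- arXiv:1906.08412 — 2 statements merged into one kernel-verified Lean document; each statement's English description precedes it below -/
import Mathlib

section
/- The Monte Carlo upper bounds on the empirical risk are monotonically non-increasing in the number of samples S: for every S ≥ 1, L̂(f) ≤ L̂_{upper,S+1}(f) ≤ L̂_{upper,S}(f), where L̂_{upper,S}(f) = E_{{λ_j}_{j=1}^S, {x'_j}_{j=1}^S}[(1/n)∑_i ℓ((1/S)∑_{j=1}^S h(ψ(x_i, x'_j, λ_j)), y_i)]. -/
/-!
Read a pair `(λⱼ, x'ⱼ)` as one sample from `ρ = μ ⊗ uniform{1, …, n}`. Then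
`L̂_{upper,S} = E Φ(mean of S i.i.d. copies of g)` with `g(λ, a)ᵢ = h(λ xᵢ + (1 - λ) x_a)` and the
convex risk `Φ(u) = (1/n) ∑ᵢ ℓ(uᵢ, yᵢ)`, while `L̂(f) = Φ(E g)`, so the lower bound is Jensen's
inequality. For monotonicity, as for importance-weighted autoencoder bounds, the mean of `S + 1`
samples is the average over `k` of the leave-`k`-out means of `S` samples; each of those has the law
of a mean of `S` samples, and convexity of `Φ` finishes the argument.
-/

open MeasureTheory

section SampleMean

variable {α E : Type*} [NormedAddCommGroup E] [NormedSpace ℝ E]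

noncomputable def sampleMean (g : α → E) {S : ℕ} (z : Fin S → α) : E :=
  (S : ℝ)⁻¹ • ∑ j, g (z j)

theorem sampleMean_succ_eq_smul_sum_sampleMean_succAbove (g : α → E) {S : ℕ} (hS : S ≠ 0)
    (z : Fin (S + 1) → α) :
    sampleMean g z =
      ((S + 1 : ℕ) : ℝ)⁻¹ • ∑ k : Fin (S + 1), sampleMean g fun j => z (k.succAbove j) := by
  have hleave : ∀ k, ∑ j, g (z (k.succAbove j)) = ∑ j, g (z j) - g (z k) := fun k => by
    rw [Fin.sum_univ_succAbove (fun j => g (z j)) k, add_sub_cancel_left]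
  unfold sampleMean
  congr 1
  calc ∑ j, g (z j) = (S : ℝ)⁻¹ • ((S : ℝ) • ∑ j, g (z j)) :=
        (inv_smul_smul₀ (Nat.cast_ne_zero.2 hS) _).symm
    _ = (S : ℝ)⁻¹ • ∑ k, (∑ j, g (z j) - g (z k)) := by
        rw [Finset.sum_sub_distrib, Finset.sum_const, Finset.card_univ, Fintype.card_fin,
          ← Nat.cast_smul_eq_nsmul ℝ, Nat.cast_add_one, add_smul, one_smul, add_sub_cancel_right]
    _ = ∑ k : Fin (S + 1), (S : ℝ)⁻¹ • ∑ j, g (z (k.succAbove j)) := by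
        simp only [hleave, Finset.smul_sum]

variable [MeasurableSpace α] {ρ : Measure α} [IsProbabilityMeasure ρ]

theorem measurePreserving_pi_comp_succAbove {S : ℕ} (k : Fin (S + 1)) :
    MeasurePreserving (fun z : Fin (S + 1) → α => fun j => z (k.succAbove j))
      (Measure.pi fun _ => ρ) (Measure.pi fun _ => ρ) :=
  measurePreserving_snd.comp (measurePreserving_piFinSuccAbove (fun _ => ρ) k)

theorem integrable_sampleMean {g : α → E} (hg : Integrable g ρ) (S : ℕ) :
    Integrable (fun z : Fin S → α => sampleMean g z) (Measure.pi fun _ => ρ) :=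
  (integrable_finsetSum _ fun j _ => integrable_comp_eval (i := j) hg).smul _

theorem integral_sampleMean [CompleteSpace E] {g : α → E} (hg : Integrable g ρ) {S : ℕ}
    (hS : S ≠ 0) :
    ∫ z : Fin S → α, sampleMean g z ∂(Measure.pi fun _ => ρ) = ∫ a, g a ∂ρ := by
  have hcoord : ∀ j : Fin S, ∫ z : Fin S → α, g (z j) ∂(Measure.pi fun _ => ρ) = ∫ a, g a ∂ρ :=
    fun j => integral_comp_eval hg.aestronglyMeasurable
  simp only [sampleMean, integral_smul,
    integral_finsetSum _ fun j _ => integrable_comp_eval (i := j) hg, hcoord, Finset.sum_const,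
    Finset.card_univ, Fintype.card_fin, ← Nat.cast_smul_eq_nsmul ℝ, smul_smul]
  rw [inv_mul_cancel₀ (Nat.cast_ne_zero.2 hS), one_smul]

theorem ConvexOn.map_integral_le_integral_comp_sampleMean [CompleteSpace E] {Φ : E → ℝ}
    (hΦ : ConvexOn ℝ Set.univ Φ) (hΦc : Continuous Φ) {g : α → E} (hg : Integrable g ρ)
    {S : ℕ} (hS : S ≠ 0)
    (hΦg : Integrable (fun z : Fin S → α => Φ (sampleMean g z)) (Measure.pi fun _ => ρ)) :
    Φ (∫ a, g a ∂ρ) ≤ ∫ z : Fin S → α, Φ (sampleMean g z) ∂(Measure.pi fun _ => ρ) := by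
  rw [← integral_sampleMean hg hS]
  exact hΦ.map_integral_le hΦc.continuousOn isClosed_univ (.of_forall fun _ => trivial)
    (integrable_sampleMean hg S) hΦg

theorem ConvexOn.integral_comp_sampleMean_succ_le {Φ : E → ℝ} (hΦ : ConvexOn ℝ Set.univ Φ)
    {g : α → E} {S : ℕ} (hS : S ≠ 0)
    (hΦS : Integrable (fun z : Fin S → α => Φ (sampleMean g z)) (Measure.pi fun _ => ρ))
    (hΦS' : Integrable (fun z : Fin (S + 1) → α => Φ (sampleMean g z))
      (Measure.pi fun _ => ρ)) :
    ∫ z : Fin (S + 1) → α, Φ (sampleMean g z) ∂(Measure.pi fun _ => ρ)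
      ≤ ∫ z : Fin S → α, Φ (sampleMean g z) ∂(Measure.pi fun _ => ρ) := by
  set w : ℝ := ((S + 1 : ℕ) : ℝ)⁻¹
  have hw : ∑ _k : Fin (S + 1), w = 1 := by
    rw [Finset.sum_const, Finset.card_univ, Fintype.card_fin, nsmul_eq_mul,
      mul_inv_cancel₀ (by positivity)]
  have hleave : ∀ k : Fin (S + 1), Integrable
      (fun z : Fin (S + 1) → α => Φ (sampleMean g fun j => z (k.succAbove j)))
      (Measure.pi fun _ => ρ) := fun k =>
    (measurePreserving_pi_comp_succAbove k).integrable_comp_of_integrable hΦS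
  have hleave_integral : ∀ k : Fin (S + 1),
      ∫ z : Fin (S + 1) → α, Φ (sampleMean g fun j => z (k.succAbove j)) ∂(Measure.pi fun _ => ρ)
        = ∫ z : Fin S → α, Φ (sampleMean g z) ∂(Measure.pi fun _ => ρ) := fun k => by
    have hk := measurePreserving_pi_comp_succAbove (ρ := ρ) k
    have := integral_map (f := fun z : Fin S → α => Φ (sampleMean g z))
      hk.measurable.aemeasurable (hk.map_eq ▸ hΦS.aestronglyMeasurable)
    rwa [hk.map_eq, eq_comm] at this
  calc ∫ z : Fin (S + 1) → α, Φ (sampleMean g z) ∂(Measure.pi fun _ => ρ)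
      ≤ ∫ z : Fin (S + 1) → α, ∑ k : Fin (S + 1), w * Φ (sampleMean g fun j => z (k.succAbove j))
          ∂(Measure.pi fun _ => ρ) := by
        refine integral_mono hΦS' (integrable_finsetSum _ fun k _ => (hleave k).const_mul w)
          fun z => ?_
        rw [sampleMean_succ_eq_smul_sum_sampleMean_succAbove g hS z, Finset.smul_sum]
        exact hΦ.map_sum_le (fun _ _ => by positivity) hw (fun _ _ => trivial)
    _ = ∫ z : Fin S → α, Φ (sampleMean g z) ∂(Measure.pi fun _ => ρ) := by
        rw [integral_finsetSum _ fun k _ => (hleave k).const_mul w]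
        simp only [integral_const_mul, hleave_integral, ← Finset.sum_mul, hw, one_mul]

end SampleMean

section FiniteFactor

variable {β γ : Type*} [MeasurableSpace β] [MeasurableSpace γ] [Fintype γ]
  [MeasurableSingletonClass γ] {M : Measure β} [SFinite M] {ν : Measure γ}

theorem MeasureTheory.Measure.prod_eq_sum_smul_map_prodMk :
    M.prod ν = ∑ c, ν {c} • M.map (fun b => (b, c)) := by
  conv_lhs => rw [← Measure.sum_smul_dirac ν]
  rw [Measure.prod_sum_right, Measure.sum_fintype]
  simp only [Measure.prod_smul_right, Measure.prod_dirac]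

variable [IsFiniteMeasure ν] {E : Type*} [NormedAddCommGroup E]

theorem integrable_prod_of_forall_integrable_prodMk {f : β × γ → E}
    (hf : ∀ c, Integrable (fun b => f (b, c)) M) : Integrable f (M.prod ν) := by
  rw [Measure.prod_eq_sum_smul_map_prodMk, integrable_finsetSum_measure]
  exact fun c _ => ((measurableEmbedding_prod_mk_right c).integrable_map_iff.2 (hf c)).smul_measure
    (measure_ne_top ν _)

theorem integral_prod_eq_integral_sum_smul [NormedSpace ℝ E] {f : β × γ → E}
    (hf : ∀ c, Integrable (fun b => f (b, c)) M) :
    ∫ p, f p ∂(M.prod ν) = ∫ b, ∑ c, ν.real {c} • f (b, c) ∂M := by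
  have hmap : ∀ c, Integrable f (M.map fun b => (b, c)) := fun c =>
    (measurableEmbedding_prod_mk_right c).integrable_map_iff.2 (hf c)
  rw [Measure.prod_eq_sum_smul_map_prodMk,
    integral_finsetSum_measure fun c _ => (hmap c).smul_measure (measure_ne_top ν _),
    integral_finsetSum (f := fun c b => ν.real {c} • f (b, c)) _ fun c _ => (hf c).smul _]
  refine Finset.sum_congr rfl fun c _ => ?_
  rw [integral_smul_measure, (measurableEmbedding_prod_mk_right c).integral_map, integral_smul,
    measureReal_def]

variable {ι : Type*} [Fintype ι] [DecidableEq ι] {μ : Measure β} [SigmaFinite μ]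

theorem integrable_pi_prod_of_forall_integrable {F : (ι → β × γ) → E}
    (hF : ∀ σ : ι → γ, Integrable (fun Λ => F fun j => (Λ j, σ j)) (Measure.pi fun _ => μ)) :
    Integrable F (Measure.pi fun _ => μ.prod ν) :=
  ((measurePreserving_arrowProdEquivProdArrow β γ ι (fun _ => μ) (fun _ => ν)).integrable_comp_emb
    (MeasurableEquiv.measurableEmbedding _) (g := fun p => F fun j => (p.1 j, p.2 j))).2
    (integrable_prod_of_forall_integrable_prodMk fun σ => hF σ)

theorem integral_pi_prod_eq_integral_sum_smul [NormedSpace ℝ E] {F : (ι → β × γ) → E}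
    (hF : ∀ σ : ι → γ, Integrable (fun Λ => F fun j => (Λ j, σ j)) (Measure.pi fun _ => μ)) :
    ∫ z, F z ∂(Measure.pi fun _ => μ.prod ν) =
      ∫ Λ, ∑ σ : ι → γ, (∏ j, ν.real {σ j}) • F (fun j => (Λ j, σ j))
        ∂(Measure.pi fun _ => μ) := by
  have he := measurePreserving_arrowProdEquivProdArrow β γ ι (fun _ => μ) (fun _ => ν)
  refine (he.integral_comp' (fun p => F fun j => (p.1 j, p.2 j))).trans ?_
  rw [integral_prod_eq_integral_sum_smul fun σ => hF σ]
  simp only [measureReal_def, Measure.pi_singleton, ENNReal.toReal_prod]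

end FiniteFactor

theorem convexOn_univ_sum_comp_apply {ι : Type*} {F : ι → Type*} [∀ i, AddCommGroup (F i)]
    [∀ i, Module ℝ (F i)] (s : Finset ι) {f : ∀ i, F i → ℝ}
    (hf : ∀ i ∈ s, ConvexOn ℝ Set.univ (f i)) :
    ConvexOn ℝ Set.univ fun u : ∀ i, F i => ∑ i ∈ s, f i (u i) := by
  refine ⟨convex_univ, fun u _ v _ a b ha hb hab => ?_⟩
  calc ∑ i ∈ s, f i (a • u i + b • v i)
      ≤ ∑ i ∈ s, (a • f i (u i) + b • f i (v i)) :=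
        Finset.sum_le_sum fun i hi => (hf i hi).2 trivial trivial ha hb hab
    _ = a • ∑ i ∈ s, f i (u i) + b • ∑ i ∈ s, f i (v i) := by
        simp only [Finset.sum_add_distrib, Finset.smul_sum]

section DataInterpolation

variable {X F Y : Type*} [AddCommGroup X] [Module ℝ X] [NormedAddCommGroup F] {n : ℕ}

noncomputable def empiricalRisk (ℓ : F → Y → ℝ) (y : Fin n → Y) (u : Fin n → F) : ℝ :=
  (1 / (n : ℝ)) * ∑ i, ℓ (u i) (y i)

def mixedPrediction (x : Fin n → X) (h : X → F) (p : ℝ × Fin n) : Fin n → F :=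
  fun i => h (p.1 • x i + (1 - p.1) • x p.2)

variable {x : Fin n → X} {h : X → F} {ℓ : F → Y → ℝ} {y : Fin n → Y} {μ : Measure ℝ}
  [SigmaFinite μ] {ν : Measure (Fin n)} [IsFiniteMeasure ν]

theorem integrable_mixedPrediction
    (hint : ∀ i j, Integrable (fun l : ℝ => h (l • x i + (1 - l) • x j)) μ) :
    Integrable (mixedPrediction x h) (μ.prod ν) :=
  Integrable.of_eval fun i => integrable_prod_of_forall_integrable_prodMk fun a => hint i a

variable [NormedSpace ℝ F]

theorem convexOn_empiricalRisk (hconv : ∀ i, ConvexOn ℝ Set.univ fun u => ℓ u (y i)) :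
    ConvexOn ℝ Set.univ (empiricalRisk ℓ y) :=
  (convexOn_univ_sum_comp_apply _ fun i _ => hconv i).smul (by positivity)

theorem empiricalRisk_sampleMean_mixedPrediction {S : ℕ} (z : Fin S → ℝ × Fin n) :
    empiricalRisk ℓ y (sampleMean (mixedPrediction x h) z) =
      (1 / (n : ℝ)) *
        ∑ i, ℓ ((1 / (S : ℝ)) • ∑ j, h ((z j).1 • x i + (1 - (z j).1) • x (z j).2)) (y i) := by
  simp only [empiricalRisk, mixedPrediction, sampleMean, Pi.smul_apply, Finset.sum_apply, one_div]

theorem integral_mixedPrediction_apply [CompleteSpace F] (hν : ∀ a, ν.real {a} = 1 / n)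
    (hint : ∀ i j, Integrable (fun l : ℝ => h (l • x i + (1 - l) • x j)) μ) (i : Fin n) :
    (∫ p, mixedPrediction x h p ∂(μ.prod ν)) i =
      ∫ l, (1 / (n : ℝ)) • ∑ j, h (l • x i + (1 - l) • x j) ∂μ := by
  rw [eval_integral (integrable_mixedPrediction hint).eval,
    integral_prod_eq_integral_sum_smul fun a => hint i a]
  simp only [hν, mixedPrediction, Finset.smul_sum]

variable {S : ℕ}

theorem integrable_empiricalRisk_sampleMean_mixedPrediction
    (hint : ∀ σ : Fin S → Fin n, Integrable (fun Λ : Fin S → ℝ =>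
      (1 / (n : ℝ)) * ∑ i, ℓ ((1 / (S : ℝ)) • ∑ j, h (Λ j • x i + (1 - Λ j) • x (σ j))) (y i))
      (Measure.pi fun _ => μ)) :
    Integrable (fun z => empiricalRisk ℓ y (sampleMean (mixedPrediction x h) z))
      (Measure.pi fun _ : Fin S => μ.prod ν) :=
  integrable_pi_prod_of_forall_integrable fun σ => by
    simpa only [empiricalRisk_sampleMean_mixedPrediction] using hint σ

theorem integral_empiricalRisk_sampleMean_mixedPrediction (hν : ∀ a, ν.real {a} = 1 / n)
    (hint : ∀ σ : Fin S → Fin n, Integrable (fun Λ : Fin S → ℝ =>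
      (1 / (n : ℝ)) * ∑ i, ℓ ((1 / (S : ℝ)) • ∑ j, h (Λ j • x i + (1 - Λ j) • x (σ j))) (y i))
      (Measure.pi fun _ => μ)) :
    ∫ z, empiricalRisk ℓ y (sampleMean (mixedPrediction x h) z)
        ∂(Measure.pi fun _ : Fin S => μ.prod ν) =
      ∫ Λ : Fin S → ℝ, ∑ σ : Fin S → Fin n, (1 / (n : ℝ)) ^ S *
        ((1 / (n : ℝ)) * ∑ i, ℓ ((1 / (S : ℝ)) • ∑ j, h (Λ j • x i + (1 - Λ j) • x (σ j))) (y i))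
        ∂(Measure.pi fun _ => μ) := by
  rw [integral_pi_prod_eq_integral_sum_smul fun σ => by
    simpa only [empiricalRisk_sampleMean_mixedPrediction] using hint σ]
  simp only [hν, empiricalRisk_sampleMean_mixedPrediction, Finset.prod_const, Finset.card_univ,
    Fintype.card_fin, smul_eq_mul]

end DataInterpolation

theorem dip_upper_bounds_monotone_general
    {d K n : ℕ} (hn : 0 < n)
    (x : Fin n → EuclideanSpace ℝ (Fin d)) {Y : Type*} (y : Fin n → Y)
    (h : EuclideanSpace ℝ (Fin d) → EuclideanSpace ℝ (Fin K))
    (ℓ : EuclideanSpace ℝ (Fin K) → Y → ℝ)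
    (hconv : ∀ i, ConvexOn ℝ Set.univ (fun u => ℓ u (y i)))
    (μ : Measure ℝ) [IsProbabilityMeasure μ]
    (hint : ∀ i j, Integrable (fun l : ℝ => h (l • x i + (1 - l) • x j)) μ)
    -- the Monte Carlo upper bound with `S` samples
    (Lupper : ℕ → ℝ)
    (hLupper : ∀ S : ℕ, 0 < S → Lupper S =
      ∫ Λ : Fin S → ℝ,
        ∑ σ : Fin S → Fin n, (1 / (n:ℝ)) ^ S *
          ((1 / (n:ℝ)) * ∑ i, ℓ ((1 / (S:ℝ)) • ∑ j, h (Λ j • x i + (1 - Λ j) • x (σ j))) (y i))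
        ∂(Measure.pi fun _ => μ))
    (hintS : ∀ S : ℕ, 0 < S → ∀ σ : Fin S → Fin n,
      Integrable (fun Λ : Fin S → ℝ =>
        (1 / (n:ℝ)) * ∑ i, ℓ ((1 / (S:ℝ)) • ∑ j, h (Λ j • x i + (1 - Λ j) • x (σ j))) (y i))
        (Measure.pi fun _ => μ)) :
    ∀ S : ℕ, 1 ≤ S →
      (1 / (n:ℝ)) * ∑ i, ℓ (∫ l, (1 / (n:ℝ)) • ∑ j, h (l • x i + (1 - l) • x j) ∂μ) (y i)
          ≤ Lupper (S + 1)
        ∧ Lupper (S + 1) ≤ Lupper S := by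
  have : Nonempty (Fin n) := ⟨⟨0, hn⟩⟩
  set ν : Measure (Fin n) := (PMF.uniformOfFintype (Fin n)).toMeasure
  have hν : ∀ a, ν.real {a} = 1 / n := fun a => by
    simp [ν, measureReal_def, PMF.uniformOfFintype_apply]
  have hΦ := convexOn_empiricalRisk hconv
  have hLupper_eq : ∀ S : ℕ, 0 < S → Lupper S = ∫ z, empiricalRisk ℓ y
      (sampleMean (mixedPrediction x h) z) ∂(Measure.pi fun _ : Fin S => μ.prod ν) := fun S hS =>
    (hLupper S hS).trans (integral_empiricalRisk_sampleMean_mixedPrediction hν (hintS S hS)).symm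
  have hint_mc : ∀ S : ℕ, 0 < S → Integrable (fun z => empiricalRisk ℓ y
      (sampleMean (mixedPrediction x h) z)) (Measure.pi fun _ : Fin S => μ.prod ν) := fun S hS =>
    integrable_empiricalRisk_sampleMean_mixedPrediction (hintS S hS)
  intro S hS
  rw [hLupper_eq S hS, hLupper_eq (S + 1) S.succ_pos]
  constructor
  · have hΦc : Continuous (empiricalRisk ℓ y) := continuousOn_univ.1 (hΦ.continuousOn isOpen_univ)
    simpa only [empiricalRisk, integral_mixedPrediction_apply hν hint] using
      hΦ.map_integral_le_integral_comp_sampleMean hΦc (integrable_mixedPrediction hint)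
        S.succ_ne_zero (hint_mc (S + 1) S.succ_pos)
  · exact hΦ.integral_comp_sampleMean_succ_le (Nat.one_le_iff_ne_zero.1 hS) (hint_mc S hS)
      (hint_mc (S + 1) S.succ_pos)

/-- the Monte Carlo upper bounds `L̂_{upper,S}` on the empirical risk of the
data-interpolating predictor are monotonically non-increasing in the number of samples `S`,
and all dominate the empirical risk `L̂(f)`. -/
theorem dip_upper_bounds_monotone
    {d K n : ℕ} (hn : 0 < n)
    (x : Fin n → EuclideanSpace ℝ (Fin d)) {Y : Type*} (y : Fin n → Y)
    (h : EuclideanSpace ℝ (Fin d) → EuclideanSpace ℝ (Fin K))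
    (ℓ : EuclideanSpace ℝ (Fin K) → Y → ℝ)
    (hconv : ∀ i, ConvexOn ℝ Set.univ (fun u => ℓ u (y i)))
    (μ : Measure ℝ) [IsProbabilityMeasure μ] (hμ : μ (Set.Icc (0:ℝ) 1)ᶜ = 0)
    (hint : ∀ i j, Integrable (fun l : ℝ => h (l • x i + (1 - l) • x j)) μ)
    -- the Monte Carlo upper bound with `S` samples
    (Lupper : ℕ → ℝ)
    (hLupper : ∀ S : ℕ, 0 < S → Lupper S =
      ∫ Λ : Fin S → ℝ,
        ∑ σ : Fin S → Fin n, (1 / (n:ℝ)) ^ S *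
          ((1 / (n:ℝ)) * ∑ i, ℓ ((1 / (S:ℝ)) • ∑ j, h (Λ j • x i + (1 - Λ j) • x (σ j))) (y i))
        ∂(Measure.pi fun _ => μ))
    (hintS : ∀ S : ℕ, 0 < S → ∀ σ : Fin S → Fin n,
      Integrable (fun Λ : Fin S → ℝ =>
        (1 / (n:ℝ)) * ∑ i, ℓ ((1 / (S:ℝ)) • ∑ j, h (Λ j • x i + (1 - Λ j) • x (σ j))) (y i))
        (Measure.pi fun _ => μ)) :
    ∀ S : ℕ, 1 ≤ S →
      (1 / (n:ℝ)) * ∑ i, ℓ (∫ l, (1 / (n:ℝ)) • ∑ j, h (l • x i + (1 - l) • x j) ∂μ) (y i)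
          ≤ Lupper (S + 1)
        ∧ Lupper (S + 1) ≤ Lupper S :=
  dip_upper_bounds_monotone_general hn x y h ℓ hconv μ hint Lupper hLupper hintS
end

section
/- For i.i.d. λ ~ p(λ) and x' uniform over {x_1,…,x_n}, the expected squared norm of mixed samples satisfies E_{λ,x'}[∑_{i=1}^n ‖λx_i + (1-λ)x'‖₂²] = n·(C_λ·(1/n)∑_i ‖x_i‖₂² + (1-C_λ)·‖(1/n)∑_i x_i‖₂²), where C_λ = E_λ[λ² + (1-λ)²]. -/
open MeasureTheory

section MixedSamples

variable {E : Type*} [NormedAddCommGroup E] [InnerProductSpace ℝ E]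

theorem norm_smul_add_one_sub_smul_sq (l : ℝ) (a b : E) :
    ‖l • a + (1 - l) • b‖ ^ 2
      = l ^ 2 * ‖a‖ ^ 2 + (1 - l) ^ 2 * ‖b‖ ^ 2 + 2 * l * (1 - l) * inner ℝ a b := by
  rw [norm_add_sq_real, real_inner_smul_left, real_inner_smul_right, norm_smul, norm_smul,
    mul_pow, mul_pow, Real.norm_eq_abs, Real.norm_eq_abs, sq_abs, sq_abs]
  ring

theorem sum_sum_inner_eq_norm_sum_sq {ι : Type*} [Fintype ι] (x : ι → E) :
    ∑ j, ∑ i, inner ℝ (x i) (x j) = ‖∑ i, x i‖ ^ 2 := by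
  rw [← real_inner_self_eq_norm_sq, inner_sum]
  simp_rw [sum_inner]

theorem sum_sum_norm_smul_add_one_sub_smul_sq {ι : Type*} [Fintype ι] (l : ℝ) (x : ι → E) :
    ∑ j, ∑ i, ‖l • x i + (1 - l) • x j‖ ^ 2
      = Fintype.card ι * (l ^ 2 + (1 - l) ^ 2) * ∑ i, ‖x i‖ ^ 2
        + 2 * l * (1 - l) * ‖∑ i, x i‖ ^ 2 := by
  simp only [norm_smul_add_one_sub_smul_sq, Finset.sum_add_distrib, ← Finset.mul_sum,
    sum_sum_inner_eq_norm_sum_sq, Finset.sum_const, Finset.card_univ, nsmul_eq_mul]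
  ring

/-- Averaging over the partner `x j` turns the cross term `2 l (1 - l) ⟪x i, x j⟫` into a
multiple of the squared norm of the mean, since `2 l (1 - l) = 1 - (l ^ 2 + (1 - l) ^ 2)`. -/
theorem mean_sum_sum_norm_smul_add_one_sub_smul_sq {n : ℕ} (l : ℝ) (x : Fin n → E) :
    (1 / (n : ℝ)) * ∑ j, ∑ i, ‖l • x i + (1 - l) • x j‖ ^ 2
      = n * ((l ^ 2 + (1 - l) ^ 2) * ((1 / (n : ℝ)) * ∑ i, ‖x i‖ ^ 2)
          + (1 - (l ^ 2 + (1 - l) ^ 2)) * ‖(1 / (n : ℝ)) • ∑ i, x i‖ ^ 2) := by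
  rcases n.eq_zero_or_pos with rfl | hn
  · simp
  rw [sum_sum_norm_smul_add_one_sub_smul_sq, norm_smul, mul_pow, Real.norm_eq_abs, sq_abs,
    Fintype.card_fin]
  field_simp
  ring

end MixedSamples

theorem Continuous.integrable_of_ae_mem_compact {X F : Type*} [MeasurableSpace X]
    [TopologicalSpace X] [OpensMeasurableSpace X] [T2Space X] [NormedAddCommGroup F]
    {μ : Measure X} [IsFiniteMeasureOnCompacts μ] {f : X → F} {K : Set X}
    (hf : Continuous f) (hK : IsCompact K) (hμK : ∀ᵐ x ∂μ, x ∈ K) : Integrable f μ := by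
  rw [← Measure.restrict_eq_self_of_ae_mem hμK]
  exact hf.continuousOn.integrableOn_compact hK

theorem integral_mul_add_one_sub_mul {α : Type*} [MeasurableSpace α] {μ : Measure α}
    [IsProbabilityMeasure μ] {a : α → ℝ} (ha : Integrable a μ) (A B : ℝ) :
    ∫ t, (a t * A + (1 - a t) * B) ∂μ = (∫ t, a t ∂μ) * A + (1 - ∫ t, a t ∂μ) * B := by
  have hb : Integrable (fun t => 1 - a t) μ := (integrable_const 1).sub ha
  rw [integral_add (ha.mul_const A) (hb.mul_const B), integral_mul_const, integral_mul_const, integral_sub (integrable_const 1) ha,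
    integral_const, probReal_univ, one_smul]

theorem expected_mixed_sq_norm_general
    {d n : ℕ} (x : Fin n → EuclideanSpace ℝ (Fin d))
    (μ : Measure ℝ) [IsProbabilityMeasure μ] (hμ : μ (Set.Icc (0:ℝ) 1)ᶜ = 0) :
    ∫ l, (1 / (n:ℝ)) * ∑ j, ∑ i, ‖l • x i + (1 - l) • x j‖ ^ 2 ∂μ
      = (n:ℝ) *
        ((∫ l, (l ^ 2 + (1 - l) ^ 2) ∂μ) * ((1 / (n:ℝ)) * ∑ i, ‖x i‖ ^ 2)
          + (1 - ∫ l, (l ^ 2 + (1 - l) ^ 2) ∂μ) * ‖(1 / (n:ℝ)) • ∑ i, x i‖ ^ 2) := by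
  have hC : Integrable (fun l : ℝ => l ^ 2 + (1 - l) ^ 2) μ :=
    Continuous.integrable_of_ae_mem_compact (by fun_prop) isCompact_Icc (mem_ae_iff.2 hμ)
  simp_rw [mean_sum_sum_norm_smul_add_one_sub_smul_sq]
  rw [integral_const_mul, integral_mul_add_one_sub_mul hC]

/-- for λ ~ p(λ) on [0,1] and x' uniform over {x_1,…,x_n}, the expected squared
norm of mixed samples equals n·(C_λ·(1/n)∑‖x_i‖² + (1-C_λ)·‖(1/n)∑x_i‖²), where
C_λ = E[λ² + (1-λ)²]. -/
theorem expected_mixed_sq_norm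
    {d n : ℕ} (hn : 0 < n) (x : Fin n → EuclideanSpace ℝ (Fin d))
    (μ : Measure ℝ) [IsProbabilityMeasure μ] (hμ : μ (Set.Icc (0:ℝ) 1)ᶜ = 0) :
    ∫ l, (1 / (n:ℝ)) * ∑ j, ∑ i, ‖l • x i + (1 - l) • x j‖ ^ 2 ∂μ
      = (n:ℝ) *
        ((∫ l, (l ^ 2 + (1 - l) ^ 2) ∂μ) * ((1 / (n:ℝ)) * ∑ i, ‖x i‖ ^ 2)
          + (1 - ∫ l, (l ^ 2 + (1 - l) ^ 2) ∂μ) * ‖(1 / (n:ℝ)) • ∑ i, x i‖ ^ 2) :=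
  expected_mixed_sq_norm_general x μ hμ
end
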